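/- arXiv:2510.14582 — 6 statements merged into one kernel-verified Lean document; each statement's English description precedes it below -/
import Mathlib

section
/- Let G be the CPDAG of the Markov equivalence class of a DAG, and let X, Y be distinct nodes such that X is a possible ancestor of Y in G and G is amenable relative to (X, Y). Then no node V ∈ Sib_G(X) is adjacent to Y in G. -/
/-- A directed acyclic graph on node set `V`: a directed edge relation with no
directed cycles (no edge `a → b` together with a directed path from `b` back to `a`). -/
structure Dag (V : Type*) where
  edge : V → V → Prop
  acyclic : ∀ a b : V, edge a b → ¬ Relation.ReflTransGen edge b a

variable {V : Type*}

namespace Dag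

/-- `a` is an ancestor of `b` (equivalently, `b` is a descendant of `a`):
there is a directed path from `a` to `b`; every node is its own ancestor. -/
def Anc (D : Dag V) (a b : V) : Prop := Relation.ReflTransGen D.edge a b

/-- `a` and `b` are adjacent (joined by an edge in either direction). -/
def Adj (D : Dag V) (a b : V) : Prop := D.edge a b ∨ D.edge b a

/-- The parents of `x` in the DAG `D`. -/
def Pa (D : Dag V) (x : V) : Set V := {a | D.edge a x}

/-- The Markov blanket of `x`: parents, children, and parents of children of `x`
(excluding `x` itself). -/
def MB (D : Dag V) (x : V) : Set V :=
  {v | v ≠ x ∧ (D.edge v x ∨ D.edge x v ∨ ∃ c : V, D.edge x c ∧ D.edge v c)}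

end Dag

/-- A path between `x` and `y` with respect to an adjacency relation `A`:
a sequence of distinct nodes, starting at `x` and ending at `y`, in which
consecutive nodes are adjacent. `n` is the number of edges of the path. -/
structure GPath (A : V → V → Prop) (x y : V) where
  n : ℕ
  f : Fin (n + 1) → V
  inj : Function.Injective f
  first : f ⟨0, by omega⟩ = x
  last : f ⟨n, by omega⟩ = y
  adj : ∀ i : Fin n, A (f i.castSucc) (f i.succ)

namespace GPath

/-- The non-endpoint node at position `i` of the path `p` is a collider with respect
to the directed edge relation `E`: both incident edges of the path point into it. -/
def ColliderAt {A : V → V → Prop} {x y : V} (p : GPath A x y)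
    (E : V → V → Prop) (i : ℕ) : Prop :=
  ∃ (_ : 0 < i) (_ : i < p.n),
    E (p.f ⟨i - 1, by omega⟩) (p.f ⟨i, by omega⟩) ∧
    E (p.f ⟨i + 1, by omega⟩) (p.f ⟨i, by omega⟩)

/-- The path `p` is blocked by the node set `S` in the DAG `D`: it contains a
non-collider that lies in `S`, or a collider such that neither the collider nor any
of its descendants lies in `S`. -/
def Blocked {A : V → V → Prop} {x y : V} (p : GPath A x y)
    (D : Dag V) (S : Set V) : Prop :=
  ∃ (i : ℕ) (_ : 0 < i) (_ : i < p.n),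
    (¬ p.ColliderAt D.edge i ∧ p.f ⟨i, by omega⟩ ∈ S) ∨
    (p.ColliderAt D.edge i ∧ ∀ d : V, D.Anc (p.f ⟨i, by omega⟩) d → d ∉ S)

end GPath

namespace Dag

/-- `x` and `y` are d-separated by `S` in the DAG `D`: every path between `x` and `y`
is blocked by `S`. -/
def dSep (D : Dag V) (x y : V) (S : Set V) : Prop :=
  ∀ p : GPath D.Adj x y, p.Blocked D S

/-- Two DAGs on the same node set are Markov equivalent if they have exactly the same
d-separation relations. -/
def MEquiv (D D' : Dag V) : Prop :=
  ∀ (x y : V) (S : Set V), D.dSep x y S ↔ D'.dSep x y S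

/-- The edge between `a` and `b` is directed `a → b` in the CPDAG of the Markov
equivalence class of `D`: the edge `a → b` holds in every DAG Markov equivalent to `D`. -/
def CpDir (D : Dag V) (a b : V) : Prop :=
  ∀ D' : Dag V, D.MEquiv D' → D'.edge a b

/-- The edge between `a` and `b` is undirected (`a − b`) in the CPDAG: `a` and `b` are
adjacent (the CPDAG has the same adjacencies as the DAGs of the MEC) but the edge is not
directed either way in the CPDAG. -/
def CpUndir (D : Dag V) (a b : V) : Prop :=
  D.Adj a b ∧ ¬ D.CpDir a b ∧ ¬ D.CpDir b a

/-- `Pa_G(a)`: the nodes with a directed edge into `a` in the CPDAG. -/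
def CpPa (D : Dag V) (a : V) : Set V := {p | D.CpDir p a}

/-- `Ch_G(a)`: the nodes `b` with the edge directed `a → b` in the CPDAG. -/
def CpCh (D : Dag V) (a : V) : Set V := {c | D.CpDir a c}

/-- `Sib_G(a)`: the nodes joined to `a` by an undirected edge in the CPDAG. -/
def CpSib (D : Dag V) (a : V) : Set V := {s | D.CpUndir a s}

end Dag

namespace GPath

/-- `p` is a possibly directed path in the CPDAG: no edge on it is directed
backwards (as `V_i ← V_{i+1}`) in the CPDAG. -/
def CpPossiblyDirected {D : Dag V} {x y : V} (p : GPath D.Adj x y) : Prop :=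
  ∀ i : Fin p.n, ¬ D.CpDir (p.f i.succ) (p.f i.castSucc)

/-- `p` is a (fully) directed path in the CPDAG: every edge on it is directed
forwards in the CPDAG. -/
def CpDirected {D : Dag V} {x y : V} (p : GPath D.Adj x y) : Prop :=
  ∀ i : Fin p.n, D.CpDir (p.f i.castSucc) (p.f i.succ)

/-- `p` is a directed path from `x` to `y` in the DAG `D` itself. -/
def DirectedIn {D : Dag V} {x y : V} (p : GPath D.Adj x y) : Prop :=
  ∀ i : Fin p.n, D.edge (p.f i.castSucc) (p.f i.succ)

/-- `p` is unshielded: for every three consecutive nodes on it, the first and the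
third are non-adjacent. -/
def Unshielded {D : Dag V} {x y : V} (p : GPath D.Adj x y) : Prop :=
  ∀ (i : ℕ) (_ : i + 2 ≤ p.n), ¬ D.Adj (p.f ⟨i, by omega⟩) (p.f ⟨i + 2, by omega⟩)

end GPath

namespace Dag

/-- `x` is a possible ancestor of `y` in the CPDAG: there is a possibly directed path
from `x` to `y`. -/
def PossAn (D : Dag V) (x y : V) : Prop :=
  ∃ p : GPath D.Adj x y, p.CpPossiblyDirected

/-- `x` is an explicit ancestor of `y` in the CPDAG: there is a fully directed path
from `x` to `y` in the CPDAG. -/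
def ExplAn (D : Dag V) (x y : V) : Prop :=
  ∃ p : GPath D.Adj x y, p.CpDirected

/-- The CPDAG is amenable relative to `(x, y)`: every possibly directed path from
`x` to `y` starts with a directed edge out of `x`. -/
def Amenable (D : Dag V) (x y : V) : Prop :=
  ∀ p : GPath D.Adj x y, p.CpPossiblyDirected →
    ∀ _ : 0 < p.n, D.CpDir (p.f ⟨0, by omega⟩) (p.f ⟨1, by omega⟩)

/-- `S` is a valid adjustment set for `(x, y)` in the DAG `D`:
(i) no element of `S` is a descendant of any node `w ≠ x` lying on a directed path
from `x` to `y`, and (ii) every path between `x` and `y` that is not a directed path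
from `x` to `y` is blocked by `S`. -/
def ValidAdjustment (D : Dag V) (x y : V) (S : Set V) : Prop :=
  (∀ s ∈ S, ∀ w : V, w ≠ x → D.Anc x w → D.Anc w y → ¬ D.Anc w s) ∧
  (∀ p : GPath D.Adj x y, ¬ p.DirectedIn → p.Blocked D S)

/-- `Cn_D(x, y)`: the nodes `w ≠ x` lying on some directed path from `x` to `y` in `D`. -/
def Cn (D : Dag V) (x y : V) : Set V := {w | w ≠ x ∧ D.Anc x w ∧ D.Anc w y}

end Dag

/-! ### Auxiliary lemmas -/

section Aux

namespace Dag

lemma edge_ne (D : Dag V) {a b : V} (h : D.edge a b) : a ≠ b := by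
  rintro rfl; exact D.acyclic a a h Relation.ReflTransGen.refl

lemma adj_ne (D : Dag V) {a b : V} (h : D.Adj a b) : a ≠ b := by
  rcases h with h | h
  · exact D.edge_ne h
  · exact (D.edge_ne h).symm

lemma adj_symm (D : Dag V) {a b : V} (h : D.Adj a b) : D.Adj b a := Or.symm h

lemma anc_antisymm (D : Dag V) {a b : V} (h1 : D.Anc a b) (h2 : D.Anc b a) : a = b := by
  rcases Relation.ReflTransGen.cases_head h1 with h | ⟨c, hac, hcb⟩
  · exact h
  · exact absurd (hcb.trans h2) (D.acyclic a c hac)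

lemma mequiv_refl (D : Dag V) : D.MEquiv D := fun _ _ _ => Iff.rfl

lemma mequiv_symm {D D' : Dag V} (h : D.MEquiv D') : D'.MEquiv D :=
  fun x y S => (h x y S).symm

lemma cpdir_edge {D : Dag V} {a b : V} (h : D.CpDir a b) : D.edge a b :=
  h D D.mequiv_refl

end Dag

namespace GPath
variable {A : V → V → Prop} {x y : V}

def nth (p : GPath A x y) (j : ℕ) : V :=
  p.f ⟨min j p.n, Nat.lt_succ_of_le (Nat.min_le_right _ _)⟩

lemma nth_eq (p : GPath A x y) {j : ℕ} (h : j ≤ p.n) :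
    p.nth j = p.f ⟨j, Nat.lt_succ_of_le h⟩ := by
  unfold nth; congr 1; exact Fin.ext (by simp [Nat.min_eq_left h])

lemma nth_zero (p : GPath A x y) : p.nth 0 = x := by
  rw [p.nth_eq (Nat.zero_le _)]; exact p.first

lemma nth_last (p : GPath A x y) : p.nth p.n = y := by
  rw [p.nth_eq le_rfl]; exact p.last

lemma adj_nth (p : GPath A x y) {j : ℕ} (h : j + 1 ≤ p.n) : A (p.nth j) (p.nth (j + 1)) := by
  rw [p.nth_eq (by omega), p.nth_eq h]
  exact p.adj ⟨j, h⟩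

lemma nth_inj (p : GPath A x y) {j k : ℕ} (hj : j ≤ p.n) (hk : k ≤ p.n)
    (h : p.nth j = p.nth k) : j = k := by
  rw [p.nth_eq hj, p.nth_eq hk] at h
  simpa using congrArg Fin.val (p.inj h)

def single (hA : A x y) (hne : x ≠ y) : GPath A x y where
  n := 1
  f := fun i => if (i : ℕ) = 0 then x else y
  inj := by
    intro i j h
    have hi := i.isLt; have hj := j.isLt
    dsimp only at h
    split_ifs at h with h1 h2 h2
    · exact Fin.ext (by omega)
    · exact absurd h hne
    · exact absurd h.symm hne
    · exact Fin.ext (by omega)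
  first := by simp
  last := by norm_num
  adj := by
    intro i
    have h0 : (i : ℕ) = 0 := by omega
    simpa [Fin.val_succ, h0] using hA

def triple (a b c : V) (h1 : A a b) (h2 : A b c) (hab : a ≠ b) (hac : a ≠ c)
    (hbc : b ≠ c) : GPath A a c where
  n := 2
  f := fun i => if (i : ℕ) = 0 then a else if (i : ℕ) = 1 then b else c
  inj := by
    intro i j h
    have hi := i.isLt; have hj := j.isLt
    dsimp only at h
    split_ifs at h <;> first
      | (exact Fin.ext (by omega))
      | (exact absurd h (by tauto))
      | (exact absurd h.symm (by tauto))
  first := by simp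
  last := by norm_num
  adj := by
    intro i
    have hi := i.isLt
    interval_cases h : (i : ℕ) <;> simp_all [Fin.val_succ]

lemma triple_nth {a b c : V} (h1 : A a b) (h2 : A b c) (hab : a ≠ b) (hac : a ≠ c)
    (hbc : b ≠ c) :
    (triple a b c h1 h2 hab hac hbc).nth 0 = a ∧
    (triple a b c h1 h2 hab hac hbc).nth 1 = b ∧
    (triple a b c h1 h2 hab hac hbc).nth 2 = c := by
  refine ⟨?_, ?_, ?_⟩ <;>
    rw [GPath.nth_eq _ (by norm_num [triple])] <;> simp [triple]

end GPath

namespace Dag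

lemma pd_nth {D : Dag V} {x y : V} {p : GPath D.Adj x y}
    (hp : p.CpPossiblyDirected) {j : ℕ} (h : j + 1 ≤ p.n) :
    ¬ D.CpDir (p.nth (j + 1)) (p.nth j) := by
  rw [p.nth_eq h, p.nth_eq (show j ≤ p.n by omega)]
  exact hp ⟨j, h⟩

lemma not_dSep_of_adj (D : Dag V) {a b : V} (h : D.Adj a b) (S : Set V) :
    ¬ D.dSep a b S := by
  intro hsep
  obtain ⟨i, hi0, hin, -⟩ := hsep (GPath.single h (D.adj_ne h))
  have hin' : i < 1 := hin
  omega

open Classical in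
lemma localMarkov (D : Dag V) {a b : V}
    (hanc : ¬ D.Anc b a) (hadj : ¬ D.Adj a b) : D.dSep a b (D.Pa b) := by
  intro p
  have hfa : p.nth 0 = a := p.nth_zero
  have hfb : p.nth p.n = b := p.nth_last
  have hne : a ≠ b := by rintro rfl; exact hanc Relation.ReflTransGen.refl
  have hn0 : p.n ≠ 0 := by
    intro h
    have hfb' := hfb
    rw [h] at hfb'
    exact hne (hfa.symm.trans hfb')
  have hn1 : p.n ≠ 1 := by
    intro h
    apply hadj
    have h2 := p.adj_nth (j := 0) (by omega)
    rwa [hfa, show (0:ℕ) + 1 = p.n by omega, hfb] at h2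
  have hn2 : 2 ≤ p.n := by omega
  have hsucc : p.n - 1 + 1 = p.n := by omega
  have hlast := p.adj_nth (j := p.n - 1) (by omega)
  rw [hsucc, hfb] at hlast
  rcases hlast with hcase | hcase
  · -- last edge points into b
    refine ⟨p.n - 1, by omega, by omega, Or.inl ⟨?_, ?_⟩⟩
    · intro hcol
      simp only [GPath.ColliderAt] at hcol
      obtain ⟨h1x, h2x, hc1x, hc2⟩ := hcol
      have hc2' : D.edge (p.nth (p.n - 1 + 1)) (p.nth (p.n - 1)) := by
        rw [p.nth_eq (by omega), p.nth_eq (by omega)]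
        exact hc2
      rw [hsucc, hfb] at hc2'
      exact D.acyclic _ b hcase (Relation.ReflTransGen.single hc2')
    · show D.edge _ b
      have h3 : D.edge (p.nth (p.n - 1)) b := hcase
      rwa [p.nth_eq (by omega)] at h3
  · -- last edge points out of b : find the closest collider
    have hQ : ∃ k : ℕ, k + 1 ≤ p.n ∧
        ∀ j, k ≤ j → j + 1 ≤ p.n → D.edge (p.nth (j + 1)) (p.nth j) := by
      refine ⟨p.n - 1, by omega, ?_⟩
      intro j hj hj1
      have hjeq : j = p.n - 1 := by omega
      subst hjeq
      rw [hsucc, hfb]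
      exact hcase
    set k := Nat.find hQ with hkdef
    obtain ⟨hk1, hkchain⟩ := Nat.find_spec hQ
    have hdesc : ∀ t, t ≤ p.n - k → D.Anc b (p.nth (p.n - t)) := by
      intro t
      induction t with
      | zero =>
        intro _
        rw [Nat.sub_zero, hfb]
        exact Relation.ReflTransGen.refl
      | succ t ih =>
        intro ht
        have h1 : k ≤ p.n - (t + 1) := by omega
        have h2 : p.n - (t + 1) + 1 ≤ p.n := by omega
        have hedge := hkchain (p.n - (t + 1)) h1 h2
        rw [show p.n - (t + 1) + 1 = p.n - t by omega] at hedge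
        exact (ih (by omega)).tail hedge
    have hkpos : 0 < k := by
      by_contra hcon
      have hk0 : k = 0 := by omega
      have h4 := hdesc p.n (by omega)
      rw [Nat.sub_self, hfa] at h4
      exact hanc h4
    have hknot := Nat.find_min hQ (m := k - 1) (by omega)
    have hkk : ¬ D.edge (p.nth k) (p.nth (k - 1)) := by
      intro hE
      apply hknot
      refine ⟨by omega, ?_⟩
      intro j hj hj1
      rcases Nat.eq_or_lt_of_le hj with hj' | hj'
      · rw [← hj', show k - 1 + 1 = k by omega]
        exact hE
      · exact hkchain j (by omega) hj1
    have hadjk := p.adj_nth (j := k - 1) (by omega)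
    rw [show k - 1 + 1 = k by omega] at hadjk
    have hEk1 : D.edge (p.nth (k - 1)) (p.nth k) := hadjk.resolve_right hkk
    have hEk2 : D.edge (p.nth (k + 1)) (p.nth k) := hkchain k le_rfl hk1
    have hanck : D.Anc b (p.nth k) := by
      have h5 := hdesc (p.n - k) le_rfl
      rwa [show p.n - (p.n - k) = k by omega] at h5
    refine ⟨k, hkpos, by omega, Or.inr ⟨⟨hkpos, by omega, ?_, ?_⟩, ?_⟩⟩
    · have := hEk1
      rwa [p.nth_eq (by omega), p.nth_eq (by omega)] at this
    · have := hEk2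
      rwa [p.nth_eq (by omega), p.nth_eq (by omega)] at this
    · intro d hd hdPa
      rw [p.nth_eq (by omega)] at hanck
      exact D.acyclic d b hdPa (hanck.trans hd)

lemma mequiv_adj {D D' : Dag V} (h : D.MEquiv D') {a b : V} (hadj : D.Adj a b) :
    D'.Adj a b := by
  by_contra hnadj
  have hne : a ≠ b := D.adj_ne hadj
  by_cases hba : D'.Anc b a
  · have hnab : ¬ D'.Anc a b := fun hab => hne (D'.anc_antisymm hab hba)
    have hsep := D'.localMarkov (a := b) (b := a) hnab (fun hc => hnadj (D'.adj_symm hc))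
    have hsep' := (h b a (D'.Pa a)).mpr hsep
    exact D.not_dSep_of_adj (D.adj_symm hadj) _ hsep'
  · have hsep := D'.localMarkov (a := a) (b := b) hba hnadj
    have hsep' := (h a b (D'.Pa b)).mpr hsep
    exact D.not_dSep_of_adj hadj _ hsep'

lemma exists_mequiv_edge {D : Dag V} {a b : V} (hadj : D.Adj a b)
    (h : ¬ D.CpDir b a) : ∃ D' : Dag V, D.MEquiv D' ∧ D'.edge a b ∧ ¬ D'.edge b a := by
  unfold Dag.CpDir at h
  push_neg at h
  obtain ⟨D', hD', hne⟩ := h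
  have hadj' : D'.Adj a b := mequiv_adj hD' hadj
  rcases hadj' with he | he
  · exact ⟨D', hD', he, hne⟩
  · exact absurd he hne

/-- Key lemma (Meek rule 1 flavour): if `c → a` is directed in the CPDAG and
`a − b` is undirected, then `c` and `b` must be adjacent. -/
lemma meek_aux (D : Dag V) {a b c : V} (hca : D.CpDir c a) (hab : D.Adj a b)
    (h1 : ¬ D.CpDir a b) (h2 : ¬ D.CpDir b a) (hcb : ¬ D.Adj c b) : False := by
  have hcbne : c ≠ b := fun h => h2 (h ▸ hca)
  have hcane : c ≠ a := D.edge_ne (cpdir_edge hca)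
  have habne : a ≠ b := D.adj_ne hab
  -- D2 : a DAG in the class with a → b
  obtain ⟨D2, hD2, hab2, hba2⟩ := exists_mequiv_edge hab h2
  -- D1 : a DAG in the class with b → a
  obtain ⟨D1, hD1, hba1, hab1⟩ := exists_mequiv_edge (D.adj_symm hab) h1
  have hca2 : D2.edge c a := hca D2 hD2
  have hca1 : D1.edge c a := hca D1 hD1
  have hAncCB : D2.Anc c b := (Relation.ReflTransGen.single hca2).tail hab2
  have hnAncBC : ¬ D2.Anc b c := fun h => hcbne (D2.anc_antisymm hAncCB h)
  have hnadj2 : ¬ D2.Adj c b := fun h => hcb (mequiv_adj (mequiv_symm hD2) h)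
  have hsep : D2.dSep c b (D2.Pa b) := D2.localMarkov hnAncBC hnadj2
  have hsep1 : D1.dSep c b (D2.Pa b) :=
    (hD1 c b (D2.Pa b)).mp ((hD2 c b (D2.Pa b)).mpr hsep)
  -- the path c → a ← b in D1 is then unblocked: contradiction
  set q := GPath.triple (A := D1.Adj) c a b (Or.inl hca1) (Or.inr hba1) hcane hcbne habne
    with hqdef
  obtain ⟨i, hi0, hin, hcases⟩ := hsep1 q
  have hin' : i < 2 := hin
  have hieq : i = 1 := by omega
  subst hieq
  have hq1 : q.f ⟨1, by omega⟩ = a := by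
    rw [← q.nth_eq (show (1:ℕ) ≤ q.n from one_le_two)]
    exact (GPath.triple_nth _ _ _ _ _).2.1
  have hq0 : q.f ⟨1 - 1, by omega⟩ = c := by
    rw [show ((⟨1 - 1, by omega⟩ : Fin (q.n + 1))) = ⟨0, by omega⟩ from Fin.ext (by norm_num)]
    exact q.first
  have hq2 : q.f ⟨1 + 1, by omega⟩ = b := by
    rw [show ((⟨1 + 1, by omega⟩ : Fin (q.n + 1))) = ⟨q.n, by omega⟩ from Fin.ext rfl]
    exact q.last
  have hcol : q.ColliderAt D1.edge 1 := by
    refine ⟨by omega, hin, ?_, ?_⟩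
    · rw [hq0, hq1]; exact hca1
    · rw [hq2, hq1]; exact hba1
  rcases hcases with ⟨hnc, -⟩ | ⟨-, hnodesc⟩
  · exact hnc hcol
  · refine hnodesc a ?_ hab2
    rw [hq1]
    exact Relation.ReflTransGen.refl

lemma shortcut {D : Dag V} {X Y : V} (p : GPath D.Adj X Y) (hp : p.CpPossiblyDirected)
    (i : ℕ) (h2 : i + 2 ≤ p.n)
    (hadj : D.Adj (p.nth i) (p.nth (i + 2)))
    (hdir : ¬ D.CpDir (p.nth (i + 2)) (p.nth i)) :
    ∃ q : GPath D.Adj X Y, q.CpPossiblyDirected ∧ q.n + 1 = p.n := by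
  have hn2 : 2 ≤ p.n := by omega
  have hm : p.n - 1 + 1 = p.n := by omega
  refine ⟨⟨p.n - 1,
    fun j => if (j : ℕ) ≤ i then p.nth (j : ℕ) else p.nth ((j : ℕ) + 1), ?_, ?_, ?_, ?_⟩, ?_, hm⟩
  · intro j k h
    have hj := j.isLt; have hk := k.isLt
    apply Fin.ext
    dsimp only at h
    split_ifs at h with hj1 hk1 hk1
    · have := p.nth_inj (by omega) (by omega) h; omega
    · have := p.nth_inj (by omega) (by omega) h; omega
    · have := p.nth_inj (by omega) (by omega) h; omega
    · have := p.nth_inj (by omega) (by omega) h; omega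
  · simp [p.nth_zero]
  · dsimp only
    rw [if_neg (by omega), hm, p.nth_last]
  · intro k
    have hk := k.isLt
    dsimp only [Fin.coe_castSucc, Fin.val_succ]
    by_cases hk1 : (k : ℕ) + 1 ≤ i
    · rw [if_pos (by omega), if_pos hk1]
      exact p.adj_nth (by omega)
    · by_cases hk0 : (k : ℕ) ≤ i
      · rw [if_pos hk0, if_neg hk1]
        have hki : (k : ℕ) = i := by omega
        rw [hki]
        exact hadj
      · rw [if_neg hk0, if_neg hk1]
        exact p.adj_nth (by omega)
  · intro k
    have hk : (k : ℕ) < p.n - 1 := k.isLt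
    dsimp only [Fin.coe_castSucc, Fin.val_succ]
    by_cases hk1 : (k : ℕ) + 1 ≤ i
    · rw [if_pos hk1, if_pos (show (k : ℕ) ≤ i by omega)]
      exact pd_nth hp (by omega)
    · by_cases hk0 : (k : ℕ) ≤ i
      · rw [if_neg hk1, if_pos hk0]
        have hki : (k : ℕ) = i := by omega
        rw [hki]
        exact hdir
      · rw [if_neg hk1, if_neg hk0]
        exact pd_nth hp (by omega)

lemma cpDirected_anc {D : Dag V} {X Y : V} (q : GPath D.Adj X Y) (hq : q.CpDirected)
    {D' : Dag V} (h : D.MEquiv D') : Relation.ReflTransGen D'.edge X Y := by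
  have key : ∀ j, j ≤ q.n → Relation.ReflTransGen D'.edge X (q.nth j) := by
    intro j
    induction j with
    | zero =>
      intro _
      rw [q.nth_zero]
    | succ j ih =>
      intro hj
      have hstep : D.CpDir (q.nth j) (q.nth (j + 1)) := by
        rw [q.nth_eq (show j ≤ q.n by omega), q.nth_eq hj]
        exact hq ⟨j, hj⟩
      exact (ih (by omega)).tail (hstep D' h)
  have hfin := key q.n le_rfl
  rwa [q.nth_last] at hfin

open Classical in
lemma directed_of_amenable (D : Dag V) {X Y : V} (hXY : X ≠ Y)
    (hposs : D.PossAn X Y) (hamen : D.Amenable X Y) :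
    ∃ q : GPath D.Adj X Y, q.CpDirected := by
  have hex : ∃ m : ℕ, ∃ q : GPath D.Adj X Y, q.CpPossiblyDirected ∧ q.n = m := by
    obtain ⟨p0, hp0⟩ := hposs
    exact ⟨p0.n, p0, hp0, rfl⟩
  obtain ⟨p, hp, hpn⟩ := Nat.find_spec hex
  have hmin : ∀ m', m' < Nat.find hex →
      ¬ ∃ q : GPath D.Adj X Y, q.CpPossiblyDirected ∧ q.n = m' :=
    fun m' h => Nat.find_min hex h
  have hn1 : 1 ≤ p.n := by
    rcases Nat.eq_zero_or_pos p.n with h | h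
    · exfalso
      apply hXY
      have hz := p.nth_zero
      have hl := p.nth_last
      rw [h] at hl
      exact hz.symm.trans hl
    · exact h
  have hC : ∀ i, i + 1 ≤ p.n → D.CpDir (p.nth i) (p.nth (i + 1)) := by
    intro i
    induction i with
    | zero =>
      intro h
      have h0 := hamen p hp (by omega)
      rw [p.nth_eq (show (0:ℕ) ≤ p.n by omega), p.nth_eq h]
      exact h0
    | succ i ih =>
      intro h
      have hci : D.CpDir (p.nth i) (p.nth (i + 1)) := ih (by omega)
      by_cases hfwd : D.CpDir (p.nth (i + 1)) (p.nth (i + 1 + 1))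
      · exact hfwd
      have hback : ¬ D.CpDir (p.nth (i + 1 + 1)) (p.nth (i + 1)) := pd_nth hp h
      have hab : D.Adj (p.nth (i + 1)) (p.nth (i + 1 + 1)) := p.adj_nth h
      by_cases hcb : D.Adj (p.nth i) (p.nth (i + 1 + 1))
      · by_cases hbc : D.CpDir (p.nth (i + 1 + 1)) (p.nth i)
        · exfalso
          obtain ⟨D2, hD2, hab2, -⟩ := exists_mequiv_edge hab hback
          exact D2.acyclic _ _ hab2
            ((Relation.ReflTransGen.single (hbc D2 hD2)).tail (hci D2 hD2))
        · exfalso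
          obtain ⟨q, hq, hqn⟩ := shortcut p hp i (by omega) hcb hbc
          exact hmin q.n (by omega) ⟨q, hq, rfl⟩
      · exact (meek_aux D hci hab hfwd hback hcb).elim
  refine ⟨p, ?_⟩
  intro i
  have hi := hC i i.2
  rw [p.nth_eq (show (i:ℕ) ≤ p.n from i.2.le), p.nth_eq i.2] at hi
  exact hi

end Dag

end Aux
/-- For distinct `X`, `Y` with `X` a possible ancestor of `Y` in the CPDAG
`G` of the MEC of a DAG, if `G` is amenable relative to `(X, Y)`, then no sibling of `X`
is adjacent to `Y` in `G`. -/
theorem sibling_not_adjacent_outcome_of_amenable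
    {V : Type*} [Fintype V] (D : Dag V) (X Y : V) (hXY : X ≠ Y)
    (hposs : D.PossAn X Y) (hamen : D.Amenable X Y) :
    ∀ v ∈ D.CpSib X, ¬ D.Adj v Y := by
  intro v hv hadj
  have hv' : D.CpUndir X v := hv
  have hXv : D.Adj X v := hv'.1
  have hnXv : ¬ D.CpDir X v := hv'.2.1
  have hnvX : ¬ D.CpDir v X := hv'.2.2
  have hXvne : X ≠ v := D.adj_ne hXv
  have hvYne : v ≠ Y := D.adj_ne hadj
  by_cases hYv : D.CpDir Y v
  · -- `Y → v` directed in the CPDAG: use a fully directed path from `X` to `Y`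
    obtain ⟨q, hq⟩ := D.directed_of_amenable hXY hposs hamen
    apply hnXv
    intro D' hD'
    have hXY' : Relation.ReflTransGen D'.edge X Y := Dag.cpDirected_anc q hq hD'
    have hXv' : Relation.ReflTransGen D'.edge X v := hXY'.tail (hYv D' hD')
    have hadj' : D'.Adj X v := Dag.mequiv_adj hD' hXv
    rcases hadj' with he | he
    · exact he
    · exact absurd hXv' (D'.acyclic v X he)
  · -- otherwise the path `X - v - Y` is possibly directed; amenability directs `X - v`
    set q : GPath D.Adj X Y := GPath.triple X v Y hXv hadj hXvne hXY hvYne with hqdef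
    have hqpd : q.CpPossiblyDirected := by
      intro i
      have hi : (i : ℕ) < 2 := i.isLt
      have e0 : q.nth 0 = X := (GPath.triple_nth hXv hadj hXvne hXY hvYne).1
      have e1 : q.nth 1 = v := (GPath.triple_nth hXv hadj hXvne hXY hvYne).2.1
      have e2 : q.nth 2 = Y := (GPath.triple_nth hXv hadj hXvne hXY hvYne).2.2
      rcases (by omega : (i : ℕ) = 0 ∨ (i : ℕ) = 1) with h0 | h0
      · have hcast : q.f i.castSucc = q.nth 0 := by
          rw [q.nth_eq (show (0:ℕ) ≤ q.n from Nat.zero_le _)]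
          congr 1
          exact Fin.ext (by simpa using h0)
        have hsucc : q.f i.succ = q.nth 1 := by
          rw [q.nth_eq (show (1:ℕ) ≤ q.n from one_le_two)]
          congr 1
          exact Fin.ext (by simpa using h0)
        rw [hcast, hsucc, e0, e1]
        exact hnvX
      · have hcast : q.f i.castSucc = q.nth 1 := by
          rw [q.nth_eq (show (1:ℕ) ≤ q.n from one_le_two)]
          congr 1
          exact Fin.ext (by simpa using h0)
        have hsucc : q.f i.succ = q.nth 2 := by
          rw [q.nth_eq (show (2:ℕ) ≤ q.n from le_refl 2)]
          congr 1
          exact Fin.ext (by simpa using h0)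
        rw [hcast, hsucc, e1, e2]
        exact hYv
    have h0 := hamen q hqpd (show 0 < q.n from Nat.zero_lt_two)
    have hx : D.CpDir (q.nth 0) (q.nth 1) := by
      rw [q.nth_eq (Nat.zero_le _), q.nth_eq (show (1:ℕ) ≤ q.n from one_le_two)]
      exact h0
    rw [(GPath.triple_nth hXv hadj hXvne hXY hvYne).1,
      (GPath.triple_nth hXv hadj hXvne hXY hvYne).2.1] at hx
    exact hnXv hx
end

section
/- Let D be a DAG, X a node of D, and Y ∈ MB(X) a node in the Markov blanket of X. Then X and Y are adjacent in D if and only if for every set S ⊆ MB(X) ∖ {Y}, X and Y are not d-separated by S in D. -/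
variable {V : Type*}

section Aux

open Relation

private lemma anc_trans' {V : Type*} {D : Dag V} {a b c : V}
    (h1 : D.Anc a b) (h2 : D.Anc b c) : D.Anc a c :=
  Relation.ReflTransGen.trans h1 h2

private lemma edge_anc' {V : Type*} {D : Dag V} {a b : V} (h : D.edge a b) : D.Anc a b :=
  Relation.ReflTransGen.single h

/-- Forward lemma: on a path all of whose colliders have a descendant in `S`,
a node with a forward-pointing edge is an ancestor of `X` or of `Y`,
provided everything in `S` is an ancestor of `X` or of `Y`. -/
private lemma fwd_aux {V : Type*} (D : Dag V) {X Y : V} (S : Set V)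
    (hS : ∀ v ∈ S, D.Anc v X ∨ D.Anc v Y)
    (p : GPath D.Adj X Y)
    (Hcol : ∀ i : ℕ, 0 < i → (hn : i < p.n) →
      p.ColliderAt D.edge i → ∃ d, D.Anc (p.f ⟨i, by omega⟩) d ∧ d ∈ S) :
    ∀ k : ℕ, ∀ i : ℕ, p.n - i ≤ k → 1 ≤ i → (hi : i < p.n) →
      D.edge (p.f ⟨i, by omega⟩) (p.f ⟨i + 1, by omega⟩) →
      D.Anc (p.f ⟨i, by omega⟩) X ∨ D.Anc (p.f ⟨i, by omega⟩) Y := by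
  intro k
  induction k with
  | zero => intro i hk h1 hi he; omega
  | succ k ih =>
    intro i hk h1 hi he
    by_cases hend : i + 1 = p.n
    · right
      have e : (⟨i + 1, by omega⟩ : Fin (p.n + 1)) = ⟨p.n, by omega⟩ := Fin.ext hend
      have hfy : p.f ⟨i + 1, by omega⟩ = Y := by rw [e]; exact p.last
      have hrtg : D.Anc (p.f ⟨i, by omega⟩) (p.f ⟨i + 1, by omega⟩) :=
        Relation.ReflTransGen.single he
      rw [hfy] at hrtg
      exact hrtg
    · have hi1 : i + 1 < p.n := by omega
      by_cases hc : D.edge (p.f ⟨i + 1 + 1, by omega⟩) (p.f ⟨i + 1, by omega⟩)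
      · -- collider at i+1
        have hcol : p.ColliderAt D.edge (i + 1) := ⟨by omega, hi1, he, hc⟩
        obtain ⟨d, hd, hdS⟩ := Hcol (i + 1) (by omega) hi1 hcol
        rcases hS d hdS with h | h
        · exact Or.inl (anc_trans' (edge_anc' he) (anc_trans' hd h))
        · exact Or.inr (anc_trans' (edge_anc' he) (anc_trans' hd h))
      · -- next edge also points forward
        have he2 : D.edge (p.f ⟨i + 1, by omega⟩) (p.f ⟨i + 1 + 1, by omega⟩) := by
          rcases p.adj ⟨i + 1, hi1⟩ with h | h
          · exact h
          · exact absurd h hc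
        rcases ih (i + 1) (by omega) (by omega) hi1 he2 with h | h
        · exact Or.inl (anc_trans' (edge_anc' he) h)
        · exact Or.inr (anc_trans' (edge_anc' he) h)

end Aux

/-- For a node `X` of a DAG `D` and `Y ∈ MB(X)` in the Markov blanket of
`X`, `X` and `Y` are adjacent in `D` iff for every set `S ⊆ MB(X) ∖ {Y}`, `X` and `Y`
are not d-separated by `S` in `D`. -/
theorem adjacent_iff_no_dSep_within_markov_blanket
    {V : Type*} [Fintype V] (D : Dag V) (X Y : V) (hY : Y ∈ D.MB X) :
    D.Adj X Y ↔ ∀ S : Set V, S ⊆ D.MB X \ {Y} → ¬ D.dSep X Y S := by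
  have hXY : X ≠ Y := fun h => hY.1 h.symm
  constructor
  · -- adjacent ⇒ never d-separated: the one-edge path cannot be blocked
    intro hadj S _ hsep
    let p : GPath D.Adj X Y :=
      { n := 1
        f := ![X, Y]
        inj := by
          intro a b hab
          fin_cases a <;> fin_cases b <;> simp_all
        first := rfl
        last := rfl
        adj := by intro i; fin_cases i; exact hadj }
    obtain ⟨i, h0, h1, _⟩ := hsep p
    have hpn : p.n = 1 := rfl
    omega
  · -- contrapositive: if not adjacent, some S ⊆ MB(X)\{Y} d-separates X and Y
    intro h
    by_contra hadj
    set S : Set V := {v | v ∈ D.MB X ∧ v ≠ Y ∧ (D.Anc v X ∨ D.Anc v Y)} with hSdef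
    have hsub : S ⊆ D.MB X \ {Y} := fun v hv => ⟨hv.1, hv.2.1⟩
    refine h S hsub ?_
    intro p
    by_contra hnb
    -- unblocked hypotheses
    have Hnc : ∀ i : ℕ, 0 < i → (hn : i < p.n) →
        ¬ p.ColliderAt D.edge i → p.f ⟨i, by omega⟩ ∉ S := by
      intro i h0 hn hcol hmem
      exact hnb ⟨i, h0, hn, Or.inl ⟨hcol, hmem⟩⟩
    have Hcol : ∀ i : ℕ, 0 < i → (hn : i < p.n) →
        p.ColliderAt D.edge i → ∃ d, D.Anc (p.f ⟨i, by omega⟩) d ∧ d ∈ S := by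
      intro i h0 hn hcol
      by_contra hno
      push_neg at hno
      exact hnb ⟨i, h0, hn, Or.inr ⟨hcol, fun d hd hdS => hno d hd hdS⟩⟩
    have hS : ∀ v ∈ S, D.Anc v X ∨ D.Anc v Y := fun v hv => hv.2.2
    -- the path has at least 2 edges
    have hn1 : 1 ≤ p.n := by
      by_contra hh
      have h0 : p.n = 0 := by omega
      apply hXY
      have e : (⟨0, by omega⟩ : Fin (p.n + 1)) = ⟨p.n, by omega⟩ := Fin.ext (by omega)
      have hl := p.last
      rw [← e] at hl
      rw [p.first] at hl
      exact hl
    have hn2 : 2 ≤ p.n := by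
      rcases Nat.lt_or_ge p.n 2 with hh | hh
      · have h1 : p.n = 1 := by omega
        exfalso
        apply hadj
        have ha : D.Adj (p.f ⟨0, by omega⟩) (p.f ⟨0 + 1, by omega⟩) := p.adj ⟨0, by omega⟩
        have e : (⟨0 + 1, by omega⟩ : Fin (p.n + 1)) = ⟨p.n, by omega⟩ :=
          Fin.ext (by show 0 + 1 = p.n; omega)
        rw [p.first, e, p.last] at ha
        exact ha
      · exact hh
    have h1n : 1 < p.n := by omega
    -- distinctness facts via injectivity
    have hv1X : p.f ⟨1, by omega⟩ ≠ X := by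
      intro hh
      have := p.inj (hh.trans p.first.symm)
      simp [Fin.ext_iff] at this
    have hv1Y : p.f ⟨1, by omega⟩ ≠ Y := by
      intro hh
      have := p.inj (hh.trans p.last.symm)
      simp [Fin.ext_iff] at this
      omega
    have hadj01 : D.Adj X (p.f ⟨1, by omega⟩) := by
      have ha : D.Adj (p.f ⟨0, by omega⟩) (p.f ⟨0 + 1, by omega⟩) := p.adj ⟨0, by omega⟩
      rw [p.first] at ha
      exact ha
    by_cases hcol1 : p.ColliderAt D.edge 1
    · -- collider at position 1
      obtain ⟨hp1, hp2, he01, he21⟩ := id hcol1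
      have heX1 : D.edge X (p.f ⟨1, by omega⟩) := by
        have h' : D.edge (p.f ⟨0, by omega⟩) (p.f ⟨1, by omega⟩) := he01
        rw [p.first] at h'
        exact h'
      obtain ⟨d, hd, hdS⟩ := Hcol 1 one_pos h1n hcol1
      have hancY : D.Anc (p.f ⟨1, by omega⟩) Y := by
        rcases hS d hdS with hh | hh
        · exact absurd (anc_trans' hd hh) (D.acyclic X _ heX1)
        · exact anc_trans' hd hh
      by_cases h2n : 1 + 1 = p.n
      · -- the node after the collider is Y itself: cycle
        have e : (⟨1 + 1, by omega⟩ : Fin (p.n + 1)) = ⟨p.n, by omega⟩ := Fin.ext h2n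
        have hfy : p.f ⟨1 + 1, by omega⟩ = Y := by rw [e]; exact p.last
        have he21' : D.edge (p.f ⟨1 + 1, by omega⟩) (p.f ⟨1, by omega⟩) := he21
        rw [hfy] at he21'
        exact D.acyclic Y _ he21' hancY
      · have h2n' : 1 + 1 < p.n := by omega
        have hv2X : p.f ⟨1 + 1, by omega⟩ ≠ X := by
          intro hh
          have := p.inj (hh.trans p.first.symm)
          simp [Fin.ext_iff] at this
        have hv2Y : p.f ⟨1 + 1, by omega⟩ ≠ Y := by
          intro hh
          have := p.inj (hh.trans p.last.symm)
          simp [Fin.ext_iff] at this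
          omega
        have hnc2 : ¬ p.ColliderAt D.edge 2 := by
          rintro ⟨hq1, hq2, he12, hq3⟩
          exact D.acyclic _ _ he12 (Relation.ReflTransGen.single he21)
        refine Hnc 2 two_pos h2n' hnc2 ?_
        exact ⟨⟨hv2X, Or.inr (Or.inr ⟨p.f ⟨1, by omega⟩, heX1, he21⟩)⟩, hv2Y,
          Or.inr (anc_trans' (edge_anc' he21) hancY)⟩
    · -- non-collider at position 1
      refine Hnc 1 one_pos h1n hcol1 ?_
      refine ⟨⟨hv1X, ?_⟩, hv1Y, ?_⟩
      · rcases hadj01 with hh | hh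
        · exact Or.inr (Or.inl hh)
        · exact Or.inl hh
      · rcases hadj01 with hh | hh
        · -- edge X → f1; since f1 is not a collider the next edge points forward
          have he12 : D.edge (p.f ⟨1, by omega⟩) (p.f ⟨1 + 1, by omega⟩) := by
            rcases p.adj ⟨1, h1n⟩ with h' | h'
            · exact h'
            · exact absurd ⟨one_pos, h1n, (p.first.symm ▸ hh : _), h'⟩ hcol1
          exact fwd_aux D S hS p Hcol p.n 1 (by omega) le_rfl h1n he12
        · exact Or.inl (edge_anc' hh)
end

section
/- Let D be a DAG and let X, Y be distinct nodes such that Y is not a descendant of X in D and X and Y are not adjacent in D. Then X and Y are d-separated by Pa_D(X), the set of parents of X, in D. -/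
variable {V : Type*}

/-- In a DAG `D`, if `Y` is not a descendant of `X` and `X` and `Y` are
not adjacent, then `X` and `Y` are d-separated by the parents `Pa_D(X)` of `X`. -/
theorem dSep_parents_of_not_descendant_not_adjacent
    {V : Type*} [Fintype V] (D : Dag V) (X Y : V) (hXY : X ≠ Y)
    (hndesc : ¬ D.Anc X Y) (hnadj : ¬ D.Adj X Y) :
    D.dSep X Y (D.Pa X) := by
  classical
  intro p
  have hadj : ∀ j (hj : j < p.n),
      D.Adj (p.f ⟨j, by omega⟩) (p.f ⟨j + 1, by omega⟩) := by
    intro j hj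
    have := p.adj ⟨j, hj⟩
    simpa [Fin.castSucc, Fin.succ, Fin.castAdd, Fin.castLE] using this
  have hn0 : 0 < p.n := by
    by_contra h
    have hn : p.n = 0 := by omega
    apply hXY
    rw [← p.first]
    have h' : p.f ⟨0, by omega⟩ = p.f ⟨p.n, by omega⟩ := by congr 1; rw [Fin.mk_eq_mk]; omega
    exact h'.trans p.last
  have hn2 : 2 ≤ p.n := by
    by_contra h
    have hn : p.n = 1 := by omega
    have h01 := hadj 0 (by omega)
    apply hnadj
    have h0 : p.f ⟨0, by omega⟩ = X := p.first
    have h1 : p.f ⟨0 + 1, by omega⟩ = Y := by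
      have h' : p.f ⟨0 + 1, by omega⟩ = p.f ⟨p.n, by omega⟩ := by congr 1; rw [Fin.mk_eq_mk]; omega
      exact h'.trans p.last
    rwa [h0, h1] at h01
  have h0X : p.f ⟨0, by omega⟩ = X := p.first
  rcases hadj 0 (by omega) with hfwd | hback
  · -- edge X → V1; find first backward edge
    rw [h0X] at hfwd
    have hexists : ∃ j, ∃ _ : j < p.n,
        D.edge (p.f ⟨j + 1, by omega⟩) (p.f ⟨j, by omega⟩) := by
      by_contra h
      push_neg at h
      apply hndesc
      have key : ∀ j (hj : j ≤ p.n), D.Anc X (p.f ⟨j, by omega⟩) := by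
        intro j
        induction j with
        | zero => intro _; rw [h0X]; exact Relation.ReflTransGen.refl
        | succ m ih =>
          intro hm
          have hmn : m < p.n := by omega
          have hf : D.edge (p.f ⟨m, by omega⟩) (p.f ⟨m + 1, by omega⟩) := by
            rcases hadj m hmn with h1 | h1
            · exact h1
            · exact absurd h1 (h m hmn)
          exact (ih (by omega)).tail hf
      have := key p.n le_rfl
      rwa [p.last] at this
    have Q : ℕ → Prop := fun j => ∃ _ : j < p.n,
        D.edge (p.f ⟨j + 1, by omega⟩) (p.f ⟨j, by omega⟩)
    obtain ⟨k, hQk, hkmin⟩ :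
        ∃ k, (∃ _ : k < p.n, D.edge (p.f ⟨k + 1, by omega⟩) (p.f ⟨k, by omega⟩)) ∧
          ∀ j < k, ¬ ∃ _ : j < p.n, D.edge (p.f ⟨j + 1, by omega⟩) (p.f ⟨j, by omega⟩) :=
      ⟨Nat.find hexists, Nat.find_spec hexists, fun j hj => Nat.find_min hexists hj⟩
    obtain ⟨hkn, hkback⟩ := hQk
    have hk1 : 1 ≤ k := by
      rcases Nat.eq_zero_or_pos k with h | h
      · exfalso
        subst h
        rw [h0X] at hkback
        exact D.acyclic X _ hfwd (Relation.ReflTransGen.single hkback)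
      · exact h
    -- forward edges before k
    have hfwdj : ∀ j (hj : j < k), D.edge (p.f ⟨j, by omega⟩) (p.f ⟨j + 1, by omega⟩) := by
      intro j hj
      have hjn : j < p.n := by omega
      rcases hadj j hjn with h1 | h1
      · exact h1
      · exact absurd ⟨hjn, h1⟩ (hkmin j hj)

    have hanc : ∀ j (hj : j ≤ k), D.Anc X (p.f ⟨j, by omega⟩) := by
      intro j
      induction j with
      | zero => intro _; rw [h0X]; exact Relation.ReflTransGen.refl
      | succ m ih =>
        intro hm
        exact (ih (by omega)).tail (hfwdj m (by omega))
    refine ⟨k, by omega, by omega, Or.inr ⟨?_, ?_⟩⟩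
    · -- collider at k
      refine ⟨by omega, by omega, ?_, ?_⟩
      · obtain ⟨m, rfl⟩ : ∃ m, k = m + 1 := ⟨k - 1, by omega⟩
        simpa using hfwdj m (by omega)
      · exact hkback
    · intro d hd hdPa
      have hXd : Relation.ReflTransGen D.edge X d := (hanc k le_rfl).trans hd
      exact D.acyclic d X hdPa hXd
  · -- edge V1 → X : V1 is a non-collider in Pa X
    rw [h0X] at hback
    refine ⟨1, by omega, by omega, Or.inl ⟨?_, ?_⟩⟩
    · rintro ⟨_, _, he1, -⟩
      have e0 : p.f ⟨1 - 1, by omega⟩ = X := h0X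
      rw [e0] at he1
      exact D.acyclic X _ he1 (Relation.ReflTransGen.single hback)
    · exact hback
end

section
/- Let G be the CPDAG of the Markov equivalence class of a DAG, and let p be an unshielded possibly directed path from X to Y in G, where X and Y are distinct. Then in every DAG D of the Markov equivalence class represented by G, no non-endpoint node of p is a collider on p in D. -/
variable {V : Type*}

section Aux

lemma Dag.anc_antisymm_s12 (D : Dag V) {u v : V} (huv : u ≠ v) :
    ¬ (D.Anc u v ∧ D.Anc v u) := by
  rintro ⟨h1, h2⟩
  rcases Relation.ReflTransGen.cases_head h1 with h | ⟨c, hc, hcv⟩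
  · exact huv h
  · exact D.acyclic u c hc (hcv.trans h2)

/-- The key separation lemma: if `y` is not a descendant of `x` and `x, y` are
non-adjacent, then `Pa(x)` d-separates `x` and `y`. -/
lemma Dag.sep_of_not_anc (D : Dag V) {x y : V} (hna : ¬ D.Anc x y)
    (hadj : ¬ D.Adj x y) : D.dSep x y (D.Pa x) := by
  intro p
  have hxy : x ≠ y := by rintro rfl; exact hna Relation.ReflTransGen.refl
  have fcongr : ∀ (a b : ℕ) (ha : a < p.n + 1) (hb : b < p.n + 1), a = b →
      p.f ⟨a, ha⟩ = p.f ⟨b, hb⟩ := by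
    intro a b ha hb h
    subst h
    rfl
  have hn0 : p.n ≠ 0 := by
    intro h
    exact hxy (p.first.symm.trans ((fcongr 0 p.n (by omega) (by omega) h.symm).trans p.last))
  have hn1 : p.n ≠ 1 := by
    intro h
    apply hadj
    have h2 := p.adj ⟨0, by omega⟩
    have e1 : p.f (Fin.castSucc ⟨0, by omega⟩) = x := p.first
    have e2 : p.f (Fin.succ ⟨0, by omega⟩) = y :=
      (fcongr 1 p.n (by omega) (by omega) h.symm).trans p.last
    rwa [e1, e2] at h2
  have hn2 : 2 ≤ p.n := by omega
  -- chain of forward edges gives ancestry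
  have anc_chain : ∀ j (hj : j ≤ p.n),
      (∀ k (hk : k < j), D.edge (p.f ⟨k, by omega⟩) (p.f ⟨k + 1, by omega⟩)) →
      D.Anc x (p.f ⟨j, by omega⟩) := by
    intro j
    induction j with
    | zero =>
      intro _ _
      rw [p.first]
      exact Relation.ReflTransGen.refl
    | succ m ih =>
      intro hj hall
      have h1 : D.Anc x (p.f ⟨m, by omega⟩) :=
        ih (by omega) (fun k hk => hall k (by omega))
      exact h1.tail (hall m (by omega))
  by_cases hall : ∀ k (hk : k < p.n), D.edge (p.f ⟨k, by omega⟩) (p.f ⟨k + 1, by omega⟩)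
  · exfalso
    apply hna
    have := anc_chain p.n le_rfl hall
    rwa [p.last] at this
  · classical
    push_neg at hall
    obtain ⟨k₀, hk₀n, hk₀e, hmin⟩ :
        ∃ k₀, ∃ _ : k₀ < p.n,
          ¬ D.edge (p.f ⟨k₀, by omega⟩) (p.f ⟨k₀ + 1, by omega⟩) ∧
          ∀ m, m < k₀ → ∀ hmn : m < p.n,
            D.edge (p.f ⟨m, by omega⟩) (p.f ⟨m + 1, by omega⟩) := by
      obtain ⟨h1, h2⟩ := Nat.find_spec hall
      exact ⟨Nat.find hall, h1, h2, fun m hm hmn => by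
        by_contra hne; exact Nat.find_min hall hm ⟨hmn, hne⟩⟩
    have hback : D.edge (p.f ⟨k₀ + 1, by omega⟩) (p.f ⟨k₀, by omega⟩) := by
      have := p.adj ⟨k₀, hk₀n⟩
      rcases this with h | h
      · exact absurd h hk₀e
      · exact h
    by_cases hk0 : k₀ = 0
    · -- first edge points into x: blocked at i = 1 as a non-collider in Pa(x)
      refine ⟨1, by omega, by omega, Or.inl ⟨?_, ?_⟩⟩
      · rintro ⟨_, _, h1, _⟩
        subst hk0
        exact hk₀e h1
      · show D.edge (p.f ⟨1, by omega⟩) x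
        subst hk0
        have h' := hback
        rw [p.first] at h'
        exact h'
    · -- collider at k₀ whose descendants avoid Pa(x)
      have hk₀1 : 1 ≤ k₀ := by omega
      have hfwd : D.edge (p.f ⟨k₀ - 1, by omega⟩) (p.f ⟨k₀, by omega⟩) := by
        have := hmin (k₀ - 1) (by omega) (by omega)
        have heq := fcongr (k₀ - 1 + 1) k₀ (by omega) (by omega) (by omega)
        rwa [heq] at this
      refine ⟨k₀, by omega, hk₀n, Or.inr ⟨⟨by omega, hk₀n, hfwd, hback⟩, ?_⟩⟩
      intro d hd hdS
      have hxk : D.Anc x (p.f ⟨k₀, by omega⟩) :=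
        anc_chain k₀ (by omega) (fun m hm => hmin m hm (by omega))
      exact D.acyclic d x hdS (hxk.trans hd)

lemma Dag.MEquiv.symm' {D D' : Dag V} (h : D.MEquiv D') : D'.MEquiv D :=
  fun x y S => (h x y S).symm

/-- An edge between distinct nodes is never d-separated. -/
lemma Dag.adj_not_dSep (D : Dag V) {u v : V} (h : D.Adj u v) (huv : u ≠ v)
    (S : Set V) : ¬ D.dSep u v S := by
  intro hsep
  have inj : Function.Injective (![u, v] : Fin 2 → V) := by
    intro i j hij
    fin_cases i <;> fin_cases j <;> simp_all
  obtain ⟨i, hi0, hin, _⟩ := hsep ⟨1, ![u, v], inj, rfl, rfl, by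
    intro i
    fin_cases i
    exact h⟩
  have hin' : i < 1 := hin
  omega

/-- Markov-equivalent DAGs have the same adjacencies. -/
lemma Dag.adj_invariant {D D₀ : Dag V} (h : D.MEquiv D₀) {u v : V}
    (hadj : D.Adj u v) (huv : u ≠ v) : D₀.Adj u v := by
  by_contra hn
  rcases (not_and_or.mp (D₀.anc_antisymm_s12 huv)) with hna | hna
  · exact D.adj_not_dSep hadj huv _ ((h u v _).mpr (D₀.sep_of_not_anc hna hn))
  · have hadj' : D.Adj v u := Or.symm hadj
    have hn' : ¬ D₀.Adj v u := fun hc => hn (Or.symm hc)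
    exact D.adj_not_dSep hadj' huv.symm _ ((h v u _).mpr (D₀.sep_of_not_anc hna hn'))

/-- The two-edge path contradiction: if `x → c ← y` in `D'` but the edge between
`x` (or `y`) and `c` is not into `c` in the Markov-equivalent `D₀`, a d-separating set
for `x, y` in both DAGs yields a contradiction. -/
lemma two_path_contra (D' D₀ : Dag V) (x y c : V) (S : Set V)
    (hxy : x ≠ y) (hxc : x ≠ c) (hyc : y ≠ c)
    (e1 : D'.edge x c) (e2 : D'.edge y c)
    (a1 : D₀.Adj x c) (a2 : D₀.Adj y c)
    (hne : ¬ D₀.edge x c ∨ ¬ D₀.edge y c)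
    (s1 : D'.dSep x y S) (s2 : D₀.dSep x y S) : False := by
  have inj : Function.Injective (![x, c, y] : Fin 3 → V) := by
    intro i j hij
    fin_cases i <;> fin_cases j <;> simp_all
  -- in D', c is a collider on the path, so c ∉ S
  have hcS : c ∉ S := by
    obtain ⟨i, hi0, hin, hb⟩ := s1 ⟨2, ![x, c, y], inj, rfl, rfl, by
      intro i
      fin_cases i
      · exact Or.inl e1
      · exact Or.inr e2⟩
    have hin' : i < 2 := hin
    have hi : i = 1 := by omega
    subst hi
    rcases hb with ⟨hnc, _⟩ | ⟨_, hd⟩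
    · exfalso
      apply hnc
      show ∃ (_ : 0 < 1) (_ : (1:ℕ) < 2), D'.edge x c ∧ D'.edge y c
      exact ⟨Nat.one_pos, by omega, e1, e2⟩
    · intro hcS
      exact hd c Relation.ReflTransGen.refl hcS
  -- in D₀, c is not a collider on the path, so c ∈ S
  have hcS' : c ∈ S := by
    obtain ⟨i, hi0, hin, hb⟩ := s2 ⟨2, ![x, c, y], inj, rfl, rfl, by
      intro i
      fin_cases i
      · exact a1
      · exact Or.symm a2⟩
    have hin' : i < 2 := hin
    have hi : i = 1 := by omega
    subst hi
    rcases hb with ⟨_, hmem⟩ | ⟨⟨_, _, h1, h2⟩, _⟩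
    · exact hmem
    · have h1' : D₀.edge x c := h1
      have h2' : D₀.edge y c := h2
      rcases hne with hh | hh
      · exact (hh h1').elim
      · exact (hh h2').elim
  exact hcS hcS'

end Aux

/-- If `p` is an unshielded possibly directed path from `X` to `Y` in the
CPDAG `G` of the MEC of a DAG (`X ≠ Y`), then in every DAG `D'` of the MEC represented by
`G`, no non-endpoint node of `p` is a collider on `p` in `D'`. -/
theorem unshielded_possiblyDirected_no_collider
    {V : Type*} [Fintype V] (D : Dag V) (X Y : V) (hXY : X ≠ Y)
    (p : GPath D.Adj X Y) (hp : p.CpPossiblyDirected) (hu : p.Unshielded) :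
    ∀ D' : Dag V, D.MEquiv D' → ∀ i : ℕ, ¬ p.ColliderAt D'.edge i := by
  intro D' hDD' i hcol
  obtain ⟨hi0, hin, hac, hbc⟩ := hcol
  have fcongr : ∀ (a b : ℕ) (ha : a < p.n + 1) (hb : b < p.n + 1), a = b →
      p.f ⟨a, ha⟩ = p.f ⟨b, hb⟩ := by
    intro a b ha hb h
    subst h
    rfl
  -- the three consecutive nodes
  -- a = p.f ⟨i-1⟩, c = p.f ⟨i⟩, b = p.f ⟨i+1⟩
  -- non-adjacency of a and b in D (unshieldedness)
  have hnadj : ¬ D.Adj (p.f ⟨i - 1, by omega⟩) (p.f ⟨i + 1, by omega⟩) := by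
    have h := hu (i - 1) (by omega)
    have e := fcongr (i - 1 + 2) (i + 1) (by omega) (by omega) (by omega)
    rwa [e] at h
  -- the CPDAG edge between c and b is not directed b → c
  have hcp := hp ⟨i, hin⟩
  rw [Dag.CpDir] at hcp
  push_neg at hcp
  obtain ⟨D₀, hDD₀, hD₀e⟩ := hcp
  have hD₀e' : ¬ D₀.edge (p.f ⟨i + 1, by omega⟩) (p.f ⟨i, by omega⟩) := hD₀e
  -- adjacencies in D along the path
  have hADac : D.Adj (p.f ⟨i - 1, by omega⟩) (p.f ⟨i, by omega⟩) := by
    have h := p.adj ⟨i - 1, by omega⟩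
    have e := fcongr (i - 1 + 1) i (by omega) (by omega) (by omega)
    have h' : D.Adj (p.f ⟨i - 1, by omega⟩) (p.f ⟨i - 1 + 1, by omega⟩) := h
    rwa [e] at h'
  have hADcb : D.Adj (p.f ⟨i, by omega⟩) (p.f ⟨i + 1, by omega⟩) := p.adj ⟨i, hin⟩
  -- distinctness of the three nodes
  have hab : p.f ⟨i - 1, by omega⟩ ≠ p.f ⟨i + 1, by omega⟩ := by
    intro h
    have := p.inj h
    rw [Fin.mk.injEq] at this
    omega
  have hac_ne : p.f ⟨i - 1, by omega⟩ ≠ p.f ⟨i, by omega⟩ := by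
    intro h
    have := p.inj h
    rw [Fin.mk.injEq] at this
    omega
  have hbc_ne : p.f ⟨i + 1, by omega⟩ ≠ p.f ⟨i, by omega⟩ := by
    intro h
    have := p.inj h
    rw [Fin.mk.injEq] at this
    omega
  -- adjacencies in D₀
  have hadjD₀ac : D₀.Adj (p.f ⟨i - 1, by omega⟩) (p.f ⟨i, by omega⟩) :=
    Dag.adj_invariant hDD₀ hADac hac_ne
  have hadjD₀bc : D₀.Adj (p.f ⟨i + 1, by omega⟩) (p.f ⟨i, by omega⟩) :=
    Dag.adj_invariant hDD₀ (Or.symm hADcb) hbc_ne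
  -- split on the direction of non-ancestry between a and b in D
  rcases not_and_or.mp (D.anc_antisymm_s12 hab) with hna | hna
  · have hsep := D.sep_of_not_anc hna hnadj
    exact two_path_contra D' D₀ _ _ _ _ hab hac_ne hbc_ne hac hbc
      hadjD₀ac hadjD₀bc (Or.inr hD₀e')
      ((hDD' _ _ _).mp hsep) ((hDD₀ _ _ _).mp hsep)
  · have hnadj' : ¬ D.Adj (p.f ⟨i + 1, by omega⟩) (p.f ⟨i - 1, by omega⟩) :=
      fun h => hnadj (Or.symm h)
    have hsep := D.sep_of_not_anc hna hnadj'
    exact two_path_contra D' D₀ _ _ _ _ hab.symm hbc_ne hac_ne hbc hac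
      hadjD₀bc hadjD₀ac (Or.inl hD₀e')
      ((hDD' _ _ _).mp hsep) ((hDD₀ _ _ _).mp hsep)
end

section
/- Let G be the CPDAG of the Markov equivalence class of a DAG, and let X, Y be distinct nodes such that X is a possible ancestor of Y in G and G is amenable relative to (X, Y). Then for every V ∈ Sib_G(X), every possibly directed path from V to Y in G contains X. -/
variable {V : Type*}

/-- For distinct `X`, `Y` with `X` a possible ancestor of `Y` in the CPDAG
`G` of the MEC of a DAG, if `G` is amenable relative to `(X, Y)`, then for every sibling
`v` of `X`, every possibly directed path from `v` to `Y` in `G` contains `X`. -/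
theorem possiblyDirected_path_from_sibling_contains_treatment
    {V : Type*} [Fintype V] (D : Dag V) (X Y : V) (hXY : X ≠ Y)
    (hposs : D.PossAn X Y) (hamen : D.Amenable X Y) :
    ∀ v ∈ D.CpSib X, ∀ q : GPath D.Adj v Y, q.CpPossiblyDirected →
      ∃ i : Fin (q.n + 1), q.f i = X := by
  intro v hv q hq
  by_contra hX
  push_neg at hX
  obtain ⟨hadjXv, hndirXv, hndirvX⟩ := hv
  have hinj : Function.Injective (Fin.cons X q.f : Fin (q.n + 1 + 1) → V) := by
    rw [Fin.cons_injective_iff]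
    refine ⟨?_, q.inj⟩
    rintro ⟨i, rfl⟩
    exact hX i rfl
  let F : Fin (q.n + 1 + 1) → V := Fin.cons X q.f
  have hF0 : F 0 = X := rfl
  have hFs : ∀ i : Fin (q.n + 1), F (Fin.succ i) = q.f i := fun i =>
    Fin.cons_succ (α := fun _ : Fin (q.n + 1 + 1) => V) X q.f i
  let p : GPath D.Adj X Y :=
    { n := q.n + 1
      f := F
      inj := hinj
      first := hF0
      last := by
        have h : (⟨q.n + 1, by omega⟩ : Fin (q.n + 1 + 1)) = Fin.succ ⟨q.n, by omega⟩ := rfl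
        rw [h, hFs]
        exact q.last
      adj := by
        intro i
        refine Fin.cases ?_ ?_ i
        · have h0 : Fin.castSucc (0 : Fin (q.n + 1)) = (0 : Fin (q.n + 2)) := rfl
          rw [h0, hF0, hFs]
          have h : q.f 0 = v := q.first
          rw [h]
          exact hadjXv
        · intro j
          have hc : Fin.castSucc (Fin.succ j) = Fin.succ (Fin.castSucc j) := rfl
          rw [hc, hFs, hFs]
          exact q.adj j }
  have hpf : ∀ i, p.f i = F i := fun _ => rfl
  have hpd : p.CpPossiblyDirected := by
    intro i
    refine Fin.cases ?_ ?_ i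
    · have h0 : Fin.castSucc (0 : Fin (q.n + 1)) = (0 : Fin (q.n + 2)) := rfl
      rw [hpf, hpf, h0, hF0, hFs]
      have h : q.f 0 = v := q.first
      rw [h]
      exact hndirvX
    · intro j
      have hc : Fin.castSucc (Fin.succ j) = Fin.succ (Fin.castSucc j) := rfl
      rw [hpf, hpf, hc, hFs, hFs]
      exact hq j
  have hdir := hamen p hpd (Nat.succ_pos _)
  have h1 : p.f ⟨1, by show 1 < q.n + 1 + 1; omega⟩ = v := by
    have h : (⟨1, by omega⟩ : Fin (q.n + 1 + 1)) = Fin.succ 0 := rfl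
    rw [hpf, h, hFs]
    exact q.first
  have h0 : p.f ⟨0, by show 0 < q.n + 1 + 1; omega⟩ = X := by
    have h : (⟨0, by omega⟩ : Fin (q.n + 1 + 1)) = 0 := rfl
    rw [hpf, h, hF0]
  rw [h0, h1] at hdir
  exact hndirXv hdir
end

section
/- Let D be a DAG and X, Y distinct nodes, and let Cn_D(X,Y) be the set of nodes W ≠ X that lie on some directed path from X to Y in D. Let Pa_D(Cn_D(X,Y)) denote the union of the parent sets of the nodes in Cn_D(X,Y), and De_D(Cn_D(X,Y)) the union of their descendant sets (each node being its own descendant). Then Pa_D(Cn_D(X,Y)) ∖ (De_D(Cn_D(X,Y)) ∪ {X}) = Pa_D(Cn_D(X,Y)) ∖ (Cn_D(X,Y) ∪ {X}). Equivalently, every node W ≠ X that is simultaneously a descendant of some node in Cn_D(X,Y) and a parent of some node in Cn_D(X,Y) itself belongs to Cn_D(X,Y). -/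
variable {V : Type*}

/-- In a DAG `D` with distinct nodes `X`, `Y`, and `Cn_D(X,Y)` the set of
nodes `W ≠ X` lying on some directed path from `X` to `Y`:
`Pa_D(Cn) ∖ (De_D(Cn) ∪ {X}) = Pa_D(Cn) ∖ (Cn ∪ {X})`. Equivalently, every node `W ≠ X`
that is simultaneously a descendant of some node of `Cn` and a parent of some node of
`Cn` itself belongs to `Cn`. -/
theorem pa_cn_diff_de_eq_pa_cn_diff_cn
    {V : Type*} [Fintype V] (D : Dag V) (X Y : V) (hXY : X ≠ Y) :
    ({a | ∃ w ∈ D.Cn X Y, D.edge a w} \ ({d | ∃ w ∈ D.Cn X Y, D.Anc w d} ∪ {X})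
        = {a | ∃ w ∈ D.Cn X Y, D.edge a w} \ (D.Cn X Y ∪ {X})) ∧
      (∀ w : V, w ≠ X → (∃ c ∈ D.Cn X Y, D.Anc c w) →
        (∃ c ∈ D.Cn X Y, D.edge w c) → w ∈ D.Cn X Y) := by
  have key : ∀ w : V, w ≠ X → (∃ c ∈ D.Cn X Y, D.Anc c w) →
      (∃ c ∈ D.Cn X Y, D.edge w c) → w ∈ D.Cn X Y := by
    rintro w hw ⟨c, ⟨_, hXc, _⟩, hcw⟩ ⟨c', ⟨_, _, hc'Y⟩, hwc'⟩
    exact ⟨hw, hXc.trans hcw, Relation.ReflTransGen.head hwc' hc'Y⟩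
  refine ⟨?_, key⟩
  ext a
  simp only [Set.mem_diff, Set.mem_union, Set.mem_setOf_eq, Set.mem_singleton_iff]
  constructor
  · rintro ⟨hpa, hde⟩
    refine ⟨hpa, fun h => hde ?_⟩
    rcases h with h | h
    · exact Or.inl ⟨a, h, Relation.ReflTransGen.refl⟩
    · exact Or.inr h
  · rintro ⟨hpa, hcn⟩
    refine ⟨hpa, fun h => hcn ?_⟩
    rcases h with ⟨c, hc, hca⟩ | h
    · exact Or.inl (key a (fun hax => hcn (Or.inr hax)) ⟨c, hc, hca⟩ hpa)
    · exact Or.inr h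
end
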